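/- Let q be an element of a commutative ring (or a real/rational parameter with q ≠ 1 where needed). The q-Stirling numbers of the second kind Ŝ_q[n,k], defined by Ŝ_q[n,k] = Ŝ_q[n-1,k-1] + [k]_q·Ŝ_q[n-1,k] with Ŝ_q[n,0]=Ŝ_q[0,n]=δ_{n,0}, satisfy Carlitz's identity: the Gaussian binomial coefficient [n choose k]_q equals ∑_{j=k}^{n} C(n,j)·(q−1)^{j−k}·Ŝ_q[j,k]. -/

import Mathlib

open Finset

/-- The q-integer `[k]_q = 1 + q + ... + q^(k-1)`. -/
def qint {K : Type*} [CommRing K] (q : K) (k : ℕ) : K := ∑ i ∈ Finset.range k, q ^ i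

/-- The q-Stirling numbers of the second kind. -/
def Shat {K : Type*} [CommRing K] (q : K) : ℕ → ℕ → K
  | 0, 0 => 1
  | 0, _ + 1 => 0
  | _ + 1, 0 => 0
  | n + 1, k + 1 => Shat q n k + qint q (k + 1) * Shat q n (k + 1)

/-- The Gaussian binomial coefficient. -/
def gauss {K : Type*} [CommRing K] (q : K) : ℕ → ℕ → K
  | 0, 0 => 1
  | 0, _ + 1 => 0
  | _ + 1, 0 => 1
  | n + 1, k + 1 => gauss q n k + q ^ (k + 1) * gauss q n (k + 1)

/-!
Both sides satisfy the recursion of the Gaussian binomials. Expanding the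
right-hand side with Pascal's rule and the recursion of `Shat`, the factor `[k+1]_q` meets one
extra factor `q - 1`, and `(q - 1) [k+1]_q + 1 = q ^ (k+1)` turns the result into
`gauss q n k + q ^ (k+1) * gauss q n (k+1)`.
-/

namespace Carlitz

variable {K : Type*} [CommRing K] (q : K)

theorem sub_one_mul_qint_add_one (k : ℕ) : (q - 1) * qint q k + 1 = q ^ k := by
  rw [qint, mul_geom_sum, sub_add_cancel]

theorem Shat_eq_zero_of_lt : ∀ {j k : ℕ}, j < k → Shat q j k = 0
  | 0, _ + 1, _ => rfl
  | j + 1, k + 1, h => by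
    rw [Shat, Shat_eq_zero_of_lt (by omega : j < k), Shat_eq_zero_of_lt (by omega : j < k + 1),
      mul_zero, add_zero]

/-- Summing over all `j ≤ n` is harmless: for `j < k` the truncated exponent `j - k` is `0`, but
`Shat q j k` vanishes. -/
def carlitzSum (n k : ℕ) : K :=
  ∑ j ∈ range (n + 1), (n.choose j : K) * (q - 1) ^ (j - k) * Shat q j k

theorem sum_Icc_eq_carlitzSum (n k : ℕ) :
    ∑ j ∈ Icc k n, (n.choose j : K) * (q - 1) ^ (j - k) * Shat q j k = carlitzSum q n k := by
  refine sum_subset (fun j hj => ?_) (fun j hj hjk => ?_)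
  · simp only [mem_Icc, mem_range] at hj ⊢
    omega
  · simp only [mem_Icc, mem_range, not_and, not_le] at hj hjk
    rw [Shat_eq_zero_of_lt q (by omega), mul_zero]

theorem carlitzSum_zero_right (n : ℕ) : carlitzSum q n 0 = 1 := by
  rw [carlitzSum, sum_eq_single 0]
  · simp [Shat]
  · rintro (_ | j) _ hj
    · exact (hj rfl).elim
    · rw [Shat, mul_zero]
  · simp

theorem carlitzSum_zero_succ (k : ℕ) : carlitzSum q 0 (k + 1) = 0 := by
  simp [carlitzSum, Shat]

theorem sub_one_pow_mul_Shat_succ (j k : ℕ) :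
    (q - 1) ^ (j - k) * Shat q j (k + 1) =
      (q - 1) * ((q - 1) ^ (j - (k + 1)) * Shat q j (k + 1)) := by
  rcases le_or_gt j k with hjk | hjk
  · rw [Shat_eq_zero_of_lt q (by omega)]
    ring
  · rw [show j - k = j - (k + 1) + 1 by omega, pow_succ]
    ring

theorem carlitzSum_succ_succ (n k : ℕ) :
    carlitzSum q (n + 1) (k + 1) = carlitzSum q n k + q ^ (k + 1) * carlitzSum q n (k + 1) := by
  set g : ℕ → K := fun j => (n.choose j : K) * (q - 1) ^ (j - (k + 1)) * Shat q j (k + 1)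
  have pascal (i : ℕ) :
      ((n + 1).choose (i + 1) : K) * (q - 1) ^ (i + 1 - (k + 1)) * Shat q (i + 1) (k + 1) =
        (n.choose i : K) * (q - 1) ^ (i - k) * Shat q i k + qint q (k + 1) * ((q - 1) * g i) +
          g (i + 1) := by
    have := sub_one_pow_mul_Shat_succ q i k
    simp only [g, Nat.choose_succ_succ, Nat.cast_add, Shat, Nat.add_sub_add_right]
    linear_combination (qint q (k + 1) * n.choose i) * this
  have shift : ∑ i ∈ range (n + 1), g (i + 1) = ∑ j ∈ range (n + 1), g j := by
    rw [sum_range_succ, sum_range_succ' g]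
    simp [g, Shat]
  rw [carlitzSum, sum_range_succ', sum_congr rfl fun i _ => pascal i, sum_add_distrib,
    sum_add_distrib, ← mul_sum, ← mul_sum, shift, Shat, mul_zero, add_zero, ← sub_one_mul_qint_add_one q (k + 1)]
  simp only [carlitzSum, g]
  ring

theorem carlitzSum_eq_gauss : ∀ n k : ℕ, carlitzSum q n k = gauss q n k
  | n, 0 => by cases n <;> rw [carlitzSum_zero_right, gauss]
  | 0, k + 1 => by rw [carlitzSum_zero_succ, gauss]
  | n + 1, k + 1 => by
    rw [carlitzSum_succ_succ, carlitzSum_eq_gauss n k, carlitzSum_eq_gauss n (k + 1), gauss]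

end Carlitz

open Carlitz in
theorem stmt_10 {K : Type*} [CommRing K] (q : K) (n k : ℕ) :
    gauss q n k = ∑ j ∈ Finset.Icc k n, (Nat.choose n j : K) * (q - 1) ^ (j - k) * Shat q j k := by
  rw [sum_Icc_eq_carlitzSum, carlitzSum_eq_gauss]
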